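/- There exists a coloring c of the infinite Hex board that is a finite-boards win for Red but in which Red does not fulfill the standard winning condition; hence the finite-boards winning condition is strictly weaker than the standard winning condition. -/

import Mathlib

/-- Hex adjacency on the infinite board `ℤ × ℤ`: `p` and `q` are adjacent iff
`q - p ∈ {(1,0), (-1,0), (0,1), (0,-1), (1,1), (-1,-1)}`. -/
def HexAdj (p q : ℤ × ℤ) : Prop :=
  q - p ∈ ({(1, 0), (-1, 0), (0, 1), (0, -1), (1, 1), (-1, -1)} : Set (ℤ × ℤ))

/-- A red `ℤ`-chain of the coloring `c`. -/
def IsRedChain (c : ℤ × ℤ → Option Bool) (f : ℤ → ℤ × ℤ) : Prop :=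
  ∀ n : ℤ, HexAdj (f n) (f (n + 1)) ∧ c (f n) = some true

/-- A blue `ℤ`-chain of the coloring `c`. -/
def IsBlueChain (c : ℤ × ℤ → Option Bool) (f : ℤ → ℤ × ℤ) : Prop :=
  ∀ n : ℤ, HexAdj (f n) (f (n + 1)) ∧ c (f n) = some false

/-- The convergence requirement for a winning red chain: for every `(a,b)` the positive
end eventually has both coordinates `> a`, `> b`, and the negative end `< a`, `< b`. -/
def RedConverges (f : ℤ → ℤ × ℤ) : Prop :=
  ∀ a b : ℤ, ∃ N : ℕ, ∀ n : ℕ, N ≤ n →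
    a < (f n).1 ∧ b < (f n).2 ∧ (f (-(n : ℤ))).1 < a ∧ (f (-(n : ℤ))).2 < b

/-- The convergence requirement for a winning blue chain. -/
def BlueConverges (f : ℤ → ℤ × ℤ) : Prop :=
  ∀ a b : ℤ, ∃ N : ℕ, ∀ n : ℕ, N ≤ n →
    (f n).1 < a ∧ b < (f n).2 ∧ a < (f (-(n : ℤ))).1 ∧ (f (-(n : ℤ))).2 < b

/-- Red fulfills the standard winning condition in the coloring `c`. -/
def RedWinsStd (c : ℤ × ℤ → Option Bool) : Prop :=
  ∃ f : ℤ → ℤ × ℤ, IsRedChain c f ∧ RedConverges f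

/-- Blue fulfills the standard winning condition in the coloring `c`. -/
def BlueWinsStd (c : ℤ × ℤ → Option Bool) : Prop :=
  ∃ f : ℤ → ℤ × ℤ, IsBlueChain c f ∧ BlueConverges f

/-- Membership in the rhombus `R((a,b), n) = {(x,y) : |x - a| ≤ n ∧ |y - b| ≤ n}`. -/
def InRhombus (a b : ℤ) (n : ℕ) (q : ℤ × ℤ) : Prop :=
  |q.1 - a| ≤ (n : ℤ) ∧ |q.2 - b| ≤ (n : ℤ)

/-- Red wins on the rhombus `R((a,b), n)` under the coloring `c`: there is a finite
sequence of cells of the rhombus, consecutive ones adjacent, all colored `some true`,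
from a cell with first coordinate `a - n` to a cell with first coordinate `a + n`. -/
def RedWinsRhombus (c : ℤ × ℤ → Option Bool) (a b : ℤ) (n : ℕ) : Prop :=
  ∃ k : ℕ, ∃ f : Fin (k + 1) → ℤ × ℤ,
    (∀ i, InRhombus a b n (f i)) ∧
    (∀ i : Fin k, HexAdj (f i.castSucc) (f i.succ)) ∧
    (∀ i, c (f i) = some true) ∧
    (f 0).1 = a - (n : ℤ) ∧ (f (Fin.last k)).1 = a + (n : ℤ)

/-- Blue wins on the rhombus `R((a,b), n)` under the coloring `c`. -/
def BlueWinsRhombus (c : ℤ × ℤ → Option Bool) (a b : ℤ) (n : ℕ) : Prop :=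
  ∃ k : ℕ, ∃ f : Fin (k + 1) → ℤ × ℤ,
    (∀ i, InRhombus a b n (f i)) ∧
    (∀ i : Fin k, HexAdj (f i.castSucc) (f i.succ)) ∧
    (∀ i, c (f i) = some false) ∧
    (f 0).2 = b - (n : ℤ) ∧ (f (Fin.last k)).2 = b + (n : ℤ)

/-- `c` is a finite-boards win for Red: for every center, Red wins on all sufficiently
large rhombus boards with that center. -/
def FiniteBoardsWinRed (c : ℤ × ℤ → Option Bool) : Prop :=
  ∀ a b : ℤ, ∃ N : ℕ, 1 ≤ N ∧ ∀ n : ℕ, N ≤ n → RedWinsRhombus c a b n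

/-- `c` is a finite-boards win for Blue. -/
def FiniteBoardsWinBlue (c : ℤ × ℤ → Option Bool) : Prop :=
  ∀ a b : ℤ, ∃ N : ℕ, 1 ≤ N ∧ ∀ n : ℕ, N ≤ n → BlueWinsRhombus c a b n

/-! Colour the horizontal axis `y = 0` red and leave every other cell empty. Every rhombus of
radius at least `|b|` contains a full horizontal segment of the axis from its left to its right
edge, so Red wins all large finite boards; but a winning `ℤ`-chain would have to climb above
every height, which is impossible when all red cells lie on one row. -/

def axisColoring (p : ℤ × ℤ) : Option Bool :=
  if p.2 = 0 then some true else none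

lemma hexAdj_add_one_fst (x y : ℤ) : HexAdj (x, y) (x + 1, y) := by
  simp [HexAdj]

lemma redWinsRhombus_of_red_row {c : ℤ × ℤ → Option Bool} {a b y : ℤ} {n : ℕ}
    (hy : |y - b| ≤ n) (hrow : ∀ x, |x - a| ≤ n → c (x, y) = some true) :
    RedWinsRhombus c a b n := by
  have hcell (i : Fin (2 * n + 1)) : |a - n + i - a| ≤ n := by
    have := i.isLt
    rw [abs_le]; constructor <;> omega
  refine ⟨2 * n, fun i => (a - n + i, y), fun i => ⟨hcell i, hy⟩, fun i => ?_,
    fun i => hrow _ (hcell i), by simp, by simp; ring⟩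
  simpa [add_assoc] using hexAdj_add_one_fst (a - n + i) y

lemma not_redWinsStd_of_red_bounded_above {c : ℤ × ℤ → Option Bool} {h : ℤ}
    (hred : ∀ p, c p = some true → p.2 ≤ h) : ¬ RedWinsStd c := by
  rintro ⟨f, hchain, hconv⟩
  obtain ⟨N, hN⟩ := hconv 0 h
  have := hred _ (hchain N).2
  have := (hN N le_rfl).2.1
  omega

/-- The finite-boards winning condition is strictly weaker than the standard winning
condition: there is a coloring that is a finite-boards win for Red but in which Red does
not fulfill the standard winning condition. -/
theorem finite_boards_win_strictly_weaker :
    ∃ c : ℤ × ℤ → Option Bool, FiniteBoardsWinRed c ∧ ¬ RedWinsStd c := by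
  refine ⟨axisColoring, fun a b => ⟨max 1 b.natAbs, le_max_left _ _, fun n hn => ?_⟩,
    not_redWinsStd_of_red_bounded_above (h := 0) fun p hp => ?_⟩
  · refine redWinsRhombus_of_red_row (y := 0) ?_ fun x _ => by simp [axisColoring]
    rw [zero_sub, abs_neg, Int.abs_eq_natAbs]
    exact_mod_cast (le_max_right _ _).trans hn
  · unfold axisColoring at hp
    split_ifs at hp
    omega
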